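/- Let G=(V,E) be a connected multigraph, Φ a class-admissible matching policy on G and μ∈ℳ(V). Let Φ̂ be a matching policy extending Φ on the minimal blow-up graph Ĝ, μ̂∈ℳ(V̂) a measure extending μ, and Φ̌ a policy on the maximal subgraph Ǧ that reduces Φ. Let L be the linear function L(ŵ)=Σ_{i∈V}|ŵ|_i + Σ_{i∈V₁}|ŵ|_{i̲} (the total length of the state word). Then for every w∈𝕎, the one-step drifts satisfy Δ^Φ_μ L(w) ≤ Δ̂^Φ̂_μ̂ L(w) ≤ Δ̌^Φ̌_μ L(w). -/

import Mathlib

open scoped BigOperators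

attribute [local instance] Classical.propDecidable

/-- A multigraph on the vertex set `V`: a symmetric binary relation on `V`,
possibly with self-loops. -/
structure Multigraph (V : Type*) where
  Adj : V → V → Prop
  symm : ∀ u v, Adj u v → Adj v u

namespace Multigraph

variable {V : Type*}

/-- The neighborhood `E(U)` of a set `U` of vertices. -/
def nbhd (G : Multigraph V) (U : Set V) : Set V :=
  {v | ∃ u ∈ U, G.Adj u v}

/-- `V₁`, the set of self-looped vertices. -/
def loopSet (G : Multigraph V) : Set V := {v | G.Adj v v}

/-- `V₂`, the set of non-self-looped vertices. -/
def nonloopSet (G : Multigraph V) : Set V := {v | ¬ G.Adj v v}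

/-- The maximal subgraph `Ǧ`, obtained by deleting all self-loops. -/
def check (G : Multigraph V) : Multigraph V where
  Adj u v := G.Adj u v ∧ u ≠ v
  symm u v h := ⟨G.symm u v h.1, h.2.symm⟩

/-- An independent set: a nonempty set of pairwise non-adjacent vertices. -/
def IsIndep (G : Multigraph V) (I : Set V) : Prop :=
  I.Nonempty ∧ ∀ i ∈ I, ∀ j ∈ I, ¬ G.Adj i j

/-- Connectivity of a multigraph: any two nodes are joined by a path of edges. -/
def Connected (G : Multigraph V) : Prop :=
  ∀ u v : V, Relation.ReflTransGen G.Adj u v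

/-- `G` is a bipartite graph: its vertex set splits into two parts such that every
edge joins the two parts (in particular, `G` has no self-loop). -/
def IsBipartiteGraph (G : Multigraph V) : Prop :=
  ∃ A B : Set V, (∀ v, v ∈ A ∨ v ∈ B) ∧ (∀ v, ¬(v ∈ A ∧ v ∈ B)) ∧
    ∀ u v, G.Adj u v → (u ∈ A ∧ v ∈ B) ∨ (u ∈ B ∧ v ∈ A)

section Meas

variable [Fintype V]

/-- Total mass `μ(S)` of a set of vertices. -/
noncomputable def mass (μ : V → ℝ) (S : Set V) : ℝ := ∑ v, S.indicator μ v

/-- `μ ∈ ℳ(V)`: a probability measure with full support on `V`. -/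
def FullSupport (μ : V → ℝ) : Prop := (∀ v, 0 < μ v) ∧ ∑ v, μ v = 1

/-- The stability condition `Ncond(G)`: fully supported probability measures `μ` such
that `μ(I) < μ(E(I))` for every independent set `I` of `G`. -/
def Ncond (G : Multigraph V) (μ : V → ℝ) : Prop :=
  FullSupport μ ∧ ∀ I : Set V, G.IsIndep I → mass μ I < mass μ (G.nbhd I)

/-- The degree of a vertex: its number of neighbors (including itself if self-looped). -/
noncomputable def deg (G : Multigraph V) (i : V) : ℕ := (G.nbhd {i}).ncard

end Meas
section Chain

variable [DecidableEq V]

/-- The state space `𝕎` of admissible queue details. -/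
def WSpace (G : Multigraph V) : Set (List V) :=
  {w | (∀ i j : V, i ≠ j → G.Adj i j → w.count i = 0 ∨ w.count j = 0) ∧
    ∀ i : V, G.Adj i i → w.count i ≤ 1}

/-- An admissible matching policy: a (possibly random) transition rule which, in state
`w` upon the arrival of an item of class `v`, appends `v` when no compatible item is in
line, and otherwise deletes one stored item of a class compatible with `v`. -/
structure Policy (G : Multigraph V) where
  next : List V → V → List V → ℝ
  nonneg : ∀ w v w', 0 ≤ next w v w'
  total : ∀ w ∈ WSpace G, ∀ v : V, (∑' w' : List V, next w v w') = 1
  noMatch : ∀ w ∈ WSpace G, ∀ v : V, (∀ a ∈ w, ¬ G.Adj a v) → next w v (w ++ [v]) = 1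
  matchRule : ∀ w ∈ WSpace G, ∀ v : V, (∃ a ∈ w, G.Adj a v) → ∀ w' : List V,
    next w v w' ≠ 0 → ∃ k : Fin w.length, G.Adj (w.get k) v ∧ w' = w.eraseIdx k

/-- The transition kernel of the buffer-content Markov chain of the model `(G,Φ,μ)`. -/
noncomputable def kernel [Fintype V] (G : Multigraph V) (pol : Policy G) (μ : V → ℝ)
    (w w' : List V) : ℝ :=
  ∑ v : V, μ v * pol.next w v w'

/-- Irreducibility (on the state space `𝕎`) of a transition kernel. -/
def Irreducible (G : Multigraph V) (P : List V → List V → ℝ) : Prop :=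
  ∀ w ∈ WSpace G, ∀ w' ∈ WSpace G, Relation.ReflTransGen (fun a b => 0 < P a b) w w'

/-- A stationary probability distribution, supported on `𝕎`, for a transition kernel. -/
def IsStationary (G : Multigraph V) (P : List V → List V → ℝ) (π : List V → ℝ) :
    Prop :=
  (∀ w, 0 ≤ π w) ∧ (∀ w ∉ WSpace G, π w = 0) ∧ (∑' w : List V, π w) = 1 ∧
    ∀ w' : List V, (∑' w : List V, π w * P w w') = π w'

/-- Positive recurrence of the chain: irreducibility together with the existence of a
stationary probability distribution. -/
def PositiveRecurrent (G : Multigraph V) (P : List V → List V → ℝ) : Prop :=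
  Irreducible G P ∧ ∃ π : List V → ℝ, IsStationary G P π

end Chain
section ClassAdm

variable [DecidableEq V]

/-- Class-admissibility: only the oldest stored item of a class may be matched, and the
(random) choice of the matched class only depends on the class detail of the state. -/
def ClassAdmissible (G : Multigraph V) (pol : Policy G) : Prop :=
  (∀ w ∈ WSpace G, ∀ v : V, (∃ a ∈ w, G.Adj a v) → ∀ w' : List V,
    pol.next w v w' ≠ 0 → ∃ j : V, G.Adj j v ∧ j ∈ w ∧ w' = w.erase j) ∧
  ∀ w ∈ WSpace G, ∀ w'' ∈ WSpace G, ∀ v j : V, (∀ i : V, w.count i = w''.count i) →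
    pol.next w v (w.erase j) = pol.next w'' v (w''.erase j)

end ClassAdm
/-- The minimal blow-up graph `Ĝ` of `G`, on the vertex set `V̂ = V ∪ V̱₁`: each
self-looped node `i` is duplicated into `i` and a copy `i̱` having the same neighborhood,
the self-loop being replaced by the edge `(i, i̱)`; copies are encoded via `Sum.inr`. -/
def blowup (G : Multigraph V) : Multigraph (V ⊕ {v : V // G.Adj v v}) where
  Adj x y :=
    match x, y with
    | Sum.inl u, Sum.inl v => G.Adj u v ∧ u ≠ v
    | Sum.inl u, Sum.inr i => G.Adj i.1 u
    | Sum.inr i, Sum.inl u => G.Adj i.1 u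
    | Sum.inr _, Sum.inr _ => False
  symm := by
    rintro (u | i) (v | j) h
    · exact ⟨G.symm u v h.1, h.2.symm⟩
    · exact h
    · exact h
    · exact h
/-- `μ̂` extends `μ` on the blow-up graph `Ĝ`: `μ̂(i) = μ(i)` for `i ∈ V₂` and
`μ̂(i) + μ̂(i̱) = μ(i)` for `i ∈ V₁`. -/
def ExtendsMeasure (G : Multigraph V) (μ : V → ℝ)
    (μh : V ⊕ {v : V // G.Adj v v} → ℝ) : Prop :=
  (∀ v : V, ¬ G.Adj v v → μh (Sum.inl v) = μ v) ∧
  ∀ i : {v : V // G.Adj v v}, μh (Sum.inl i.1) + μh (Sum.inr i) = μ i.1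
/-- `Φ̂` extends `Φ` on `Ĝ`: whenever both systems are in the same state `w ∈ 𝕎`
and welcome the same arrival (so that the sets of available matches coincide), the
distribution of the chosen match is the same under `Φ̂` and `Φ`. -/
def ExtendsPolicy [DecidableEq V] (G : Multigraph V) (pol : Policy G)
    (polh : Policy (blowup G)) : Prop :=
  (∀ w ∈ WSpace G, ∀ v : V, ¬ (G.Adj v v ∧ v ∈ w) → ∀ w' : List V,
    polh.next (w.map Sum.inl) (Sum.inl v) (w'.map Sum.inl) = pol.next w v w') ∧
  ∀ w ∈ WSpace G, ∀ i : {v : V // G.Adj v v}, (∃ a ∈ w, G.Adj a i.1) → ∀ w' : List V,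
    polh.next (w.map Sum.inl) (Sum.inr i) (w'.map Sum.inl) = pol.next w i.1 w'
/-- `Φ̌` reduces `Φ` on `Ǧ`: whenever both systems are in the same state `w ∈ 𝕎`
and welcome the same arrival (so that the sets of available matches coincide), the
distribution of the chosen match is the same under `Φ̌` and `Φ`. -/
def ReducesPolicy [DecidableEq V] (G : Multigraph V) (pol : Policy G)
    (polc : Policy (check G)) : Prop :=
  ∀ w ∈ WSpace G, ∀ v : V, ¬ (G.Adj v v ∧ v ∈ w) → ∀ w' : List V,
    polc.next w v w' = pol.next w v w'
/-- The one-step drift of a functional `F` for the model `(G',Ψ,λ)` at state `w`: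
`Δ F(w) = E[F(W_{n+1}) - F(W_n) | W_n = w]`. -/
noncomputable def drift {V' : Type*} [Fintype V'] [DecidableEq V'] (G' : Multigraph V')
    (pol : Policy G') (lam : V' → ℝ) (F : List V' → ℝ) (w : List V') : ℝ :=
  (∑ v : V', lam v * ∑' w' : List V', pol.next w v w' * F w') - F w
end Multigraph

/-!
Whatever the policy, an arrival decreases the length of the state word by one when it finds
a compatible item and increases it by one otherwise, so the drift of `L` only records which
arrivals find a match. Splitting `μ(i) = μ̂(i) + μ̂(i̲)` on self-looped classes, an arrival `i̲`
in `Ĝ` finds a match exactly when `i` does in `G`, and an arrival `v ∈ V` in `Ĝ` exactly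
when `v` does in `Ǧ`. Since every edge of `Ǧ` is an edge of `G`, deleting edges can only turn
a `-1` into a `+1`, which gives both inequalities.
-/

namespace Multigraph

variable {V : Type*}

noncomputable def lengthAfterArrival (G : Multigraph V) (w : List V) (v : V) : ℝ :=
  if ∃ a ∈ w, G.Adj a v then (w.length : ℝ) - 1 else (w.length : ℝ) + 1

lemma lengthAfterArrival_le_of_le {G H : Multigraph V} (hHG : ∀ a b, H.Adj a b → G.Adj a b)
    (w : List V) (v : V) : lengthAfterArrival G w v ≤ lengthAfterArrival H w v := by
  unfold lengthAfterArrival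
  by_cases hH : ∃ a ∈ w, H.Adj a v
  · obtain ⟨a, ha, hav⟩ := hH
    rw [if_pos ⟨a, ha, hHG a v hav⟩, if_pos ⟨a, ha, hav⟩]
  · rw [if_neg hH]
    split_ifs <;> linarith

lemma blowup_adj_inl_inl_iff {G : Multigraph V} {u v : V} :
    (blowup G).Adj (Sum.inl u) (Sum.inl v) ↔ (check G).Adj u v := Iff.rfl

lemma blowup_adj_inl_inr_iff {G : Multigraph V} {u : V} {i : {v : V // G.Adj v v}} :
    (blowup G).Adj (Sum.inl u) (Sum.inr i) ↔ G.Adj u i.1 :=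
  ⟨G.symm _ _, G.symm _ _⟩

lemma lengthAfterArrival_blowup_inl (G : Multigraph V) (w : List V) (v : V) :
    lengthAfterArrival (blowup G) (w.map Sum.inl) (Sum.inl v) =
      lengthAfterArrival (check G) w v := by
  simp only [lengthAfterArrival, List.length_map, List.mem_map, blowup_adj_inl_inl_iff,
    exists_exists_and_eq_and]

lemma lengthAfterArrival_blowup_inr (G : Multigraph V) (w : List V) (i : {v : V // G.Adj v v}) :
    lengthAfterArrival (blowup G) (w.map Sum.inl) (Sum.inr i) = lengthAfterArrival G w i.1 := by
  simp only [lengthAfterArrival, List.length_map, List.mem_map, blowup_adj_inl_inr_iff,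
    exists_exists_and_eq_and]

section Policy

variable [DecidableEq V] {G : Multigraph V} (pol : Policy G) {w : List V} {v : V}

lemma Policy.eq_append_of_next_ne_zero (hw : w ∈ WSpace G) (hv : ∀ a ∈ w, ¬ G.Adj a v)
    {w' : List V} (hw' : pol.next w v w' ≠ 0) : w' = w ++ [v] := by
  by_contra hne
  have hsum : Summable (pol.next w v) := by
    by_contra hns
    simpa [tsum_eq_zero_of_not_summable hns] using pol.total w hw v
  have hpair := hsum.sum_le_tsum {w ++ [v], w'} fun x _ => pol.nonneg w v x
  rw [Finset.sum_pair (Ne.symm hne), pol.total w hw v, pol.noMatch w hw v hv] at hpair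
  exact hw' (le_antisymm (by linarith) (pol.nonneg w v w'))

lemma Policy.length_add_one_of_next_ne_zero (hw : w ∈ WSpace G) (hv : ∃ a ∈ w, G.Adj a v)
    {w' : List V} (hw' : pol.next w v w' ≠ 0) : w'.length + 1 = w.length := by
  obtain ⟨k, -, rfl⟩ := pol.matchRule w hw v hv w' hw'
  exact List.length_eraseIdx_add_one k.isLt

lemma Policy.tsum_next_mul_eq_of_support (hw : w ∈ WSpace G) (F : List V → ℝ) {c : ℝ}
    (hF : ∀ w', pol.next w v w' ≠ 0 → F w' = c) :
    ∑' w', pol.next w v w' * F w' = c := by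
  have hterm : ∀ w', pol.next w v w' * F w' = pol.next w v w' * c := by
    intro w'
    by_cases hz : pol.next w v w' = 0
    · simp [hz]
    · rw [hF w' hz]
  rw [tsum_congr hterm, tsum_mul_right, pol.total w hw v, one_mul]

lemma Policy.tsum_next_mul_length (hw : w ∈ WSpace G) :
    ∑' w', pol.next w v w' * (w'.length : ℝ) = lengthAfterArrival G w v := by
  unfold lengthAfterArrival
  split_ifs with hv
  · refine pol.tsum_next_mul_eq_of_support hw _ fun w' hw' => ?_
    have := pol.length_add_one_of_next_ne_zero hw hv hw'
    rw [← this]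
    push_cast
    ring
  · push Not at hv
    refine pol.tsum_next_mul_eq_of_support hw _ fun w' hw' => ?_
    rw [pol.eq_append_of_next_ne_zero hw hv hw', List.length_append, List.length_singleton]
    push_cast
    rfl

lemma drift_length_eq [Fintype V] (lam : V → ℝ) (hw : w ∈ WSpace G) :
    drift G pol lam (fun u => (u.length : ℝ)) w =
      ∑ v, lam v * lengthAfterArrival G w v - w.length := by
  simp only [drift, pol.tsum_next_mul_length hw]

end Policy

lemma WSpace_subset_WSpace_check [DecidableEq V] (G : Multigraph V) :
    WSpace G ⊆ WSpace (check G) :=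
  fun _ hw => ⟨fun i j hne hij => hw.1 i j hne hij.1, fun _ hii => absurd rfl hii.2⟩

lemma map_inl_mem_WSpace_blowup [DecidableEq V] {G : Multigraph V} {w : List V}
    (hw : w ∈ WSpace G) : w.map Sum.inl ∈ WSpace (blowup G) := by
  refine ⟨?_, ?_⟩
  · rintro (i | i) (j | j) hne hij
    · simpa only [List.count_eq_zero, List.mem_map, Sum.inl.injEq, exists_eq_right]
        using hw.1 i j hij.2 hij.1
    · exact Or.inr (by simp [List.count_eq_zero])
    · exact Or.inl (by simp [List.count_eq_zero])
    · exact hij.elim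
  · rintro (i | i) hii
    · exact absurd rfl hii.2
    · exact hii.elim

lemma ExtendsMeasure.sum_mul_eq [Fintype V] {G : Multigraph V} {μ : V → ℝ}
    {μh : V ⊕ {v : V // G.Adj v v} → ℝ} (hem : ExtendsMeasure G μ μh) (f : V → ℝ) :
    ∑ v, μ v * f v =
      ∑ v, μh (Sum.inl v) * f v + ∑ i : {v : V // G.Adj v v}, μh (Sum.inr i) * f i.1 := by
  rw [← Fintype.sum_subtype_add_sum_subtype (fun v => G.Adj v v) (fun v => μ v * f v),
    ← Fintype.sum_subtype_add_sum_subtype (fun v => G.Adj v v) (fun v => μh (Sum.inl v) * f v)]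
  simp only [← hem.2, fun v : {v // ¬ G.Adj v v} => hem.1 v v.2, add_mul, Finset.sum_add_distrib]
  ring

end Multigraph

open Multigraph

theorem drift_linear_le_blowup_le_check_general {V : Type*} [Fintype V] [DecidableEq V]
    (G : Multigraph V) (pol : Policy G) (polh : Policy (blowup G)) (polc : Policy (check G))
    (μ : V → ℝ) (μh : V ⊕ {v : V // G.Adj v v} → ℝ) (hμh : FullSupport μh)
    (hem : ExtendsMeasure G μ μh)
    (w : List V) (hw : w ∈ WSpace G) :
    drift G pol μ (fun u : List V => (u.length : ℝ)) w ≤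
      drift (blowup G) polh μh
        (fun u : List (V ⊕ {v : V // G.Adj v v}) => (u.length : ℝ)) (w.map Sum.inl) ∧
    drift (blowup G) polh μh
        (fun u : List (V ⊕ {v : V // G.Adj v v}) => (u.length : ℝ)) (w.map Sum.inl) ≤
      drift (check G) polc μ (fun u : List V => (u.length : ℝ)) w := by
  have hcheck_le : ∀ a b, (check G).Adj a b → G.Adj a b := fun _ _ h => h.1
  have hμh_nonneg : ∀ x, 0 ≤ μh x := fun x => (hμh.1 x).le
  rw [drift_length_eq pol μ hw, drift_length_eq polc μ (WSpace_subset_WSpace_check G hw),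
    drift_length_eq polh μh (map_inl_mem_WSpace_blowup hw), Fintype.sum_sum_type,
    List.length_map, hem.sum_mul_eq, hem.sum_mul_eq]
  simp only [lengthAfterArrival_blowup_inl, lengthAfterArrival_blowup_inr]
  constructor
  · gcongr with v
    · exact hμh_nonneg _
    · exact lengthAfterArrival_le_of_le hcheck_le w v
  · gcongr with i
    · exact hμh_nonneg _
    · exact lengthAfterArrival_le_of_le hcheck_le w i.1

/-- Drift comparison for the linear function `L` (the total length of
the state word): for a class-admissible policy `Φ` on `G`, a policy `Φ̂` extending `Φ`
on `Ĝ`, a measure `μ̂` extending `μ`, and a policy `Φ̌` reducing `Φ` on `Ǧ`, for every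
`w ∈ 𝕎`, `Δ^Φ_μ L(w) ≤ Δ̂^Φ̂_μ̂ L(w) ≤ Δ̌^Φ̌_μ L(w)`. -/
theorem drift_linear_le_blowup_le_check {V : Type*} [Fintype V] [DecidableEq V]
    (G : Multigraph V) (hconn : G.Connected)
    (pol : Policy G) (hca : ClassAdmissible G pol)
    (polh : Policy (blowup G)) (hext : ExtendsPolicy G pol polh)
    (polc : Policy (check G)) (hred : ReducesPolicy G pol polc)
    (μ : V → ℝ) (hμ : FullSupport μ)
    (μh : V ⊕ {v : V // G.Adj v v} → ℝ) (hμh : FullSupport μh)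
    (hem : ExtendsMeasure G μ μh)
    (w : List V) (hw : w ∈ WSpace G) :
    drift G pol μ (fun u : List V => (u.length : ℝ)) w ≤
      drift (blowup G) polh μh
        (fun u : List (V ⊕ {v : V // G.Adj v v}) => (u.length : ℝ)) (w.map Sum.inl) ∧
    drift (blowup G) polh μh
        (fun u : List (V ⊕ {v : V // G.Adj v v}) => (u.length : ℝ)) (w.map Sum.inl) ≤
      drift (check G) polc μ (fun u : List V => (u.length : ℝ)) w :=
  drift_linear_le_blowup_le_check_general G pol polh polc μ μh hμh hem w hw
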